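/- Let a_1,…,a_n be the roots of p_n(z) = Σ_{k=0}^n (n choose k)^2 z^k. Then for each i: Σ_{j ≠ i} (a_i + a_j)/(n²(a_i - a_j)) + (1 + a_i)/(n(1 - a_i)) = 0. -/

import Mathlib

noncomputable def pn (n : ℕ) (z : ℂ) : ℂ :=
  ∑ k ∈ Finset.range (n + 1), ((n.choose k : ℂ)) ^ 2 * z ^ k

/-!
The polynomial `p = ∑ C(n,k)² X^k` satisfies the hypergeometric equation
`z(1-z) p'' + (1 + (2n-1)z) p' = n² p`, which on coefficients is `(k+1) C(n,k+1) = (n-k) C(n,k)`.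
Writing `p = (X - a_i) q` with `q = ∏_{j ≠ i} (X - a_j)`, one has `p'(a_i) = q(a_i) ≠ 0` and
`p''(a_i) = 2 q'(a_i) = 2 q(a_i) ∑_{j ≠ i} 1/(a_i - a_j)`, so the equation at the root `a_i`
gives `2 a_i (1 - a_i) ∑_{j ≠ i} 1/(a_i - a_j) + 1 + (2n-1) a_i = 0`.
The claim is this relation divided by `n² (1 - a_i)`, after
`(a_i + a_j)/(a_i - a_j) = 2a_i/(a_i - a_j) - 1`; here `a_i ≠ 1` since `p(1) = C(2n,n)`.
-/

open Polynomial Finset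

section Field

variable {K ι : Type*} [Field K]

theorem eq_prod_X_sub_C_of_injective [Fintype ι] {p : K[X]} (hp : p.Monic)
    (hdeg : p.natDegree ≤ Fintype.card ι) {a : ι → K} (ha : Function.Injective a)
    (hroot : ∀ i, p.IsRoot (a i)) : p = ∏ i, (X - C (a i)) :=
  eq_of_monic_of_dvd_of_natDegree_le (monic_prod_of_monic _ _ fun i _ => monic_X_sub_C _) hp
    (Fintype.prod_dvd_of_coprime (pairwise_coprime_X_sub_C ha) fun i =>
      dvd_iff_isRoot.mpr (hroot i))
    (by simpa using hdeg)

theorem eval_derivative_prod_X_sub_C [DecidableEq ι] (s : Finset ι) (a : ι → K) {z : K}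
    (hz : ∀ j ∈ s, z ≠ a j) :
    (derivative (∏ j ∈ s, (X - C (a j)))).eval z
      = (∏ j ∈ s, (X - C (a j))).eval z * ∑ j ∈ s, 1 / (z - a j) := by
  simp only [derivative_prod_finset, derivative_X_sub_C, mul_one, eval_finsetSum, eval_prod,
    eval_sub, eval_X, eval_C, mul_sum]
  refine sum_congr rfl fun j hj => ?_
  rw [← mul_prod_erase s _ hj]
  field_simp [sub_ne_zero.mpr (hz j hj)]

theorem sum_add_div_mul_sub (s : Finset ι) (b : ι → K) (c : K) {z : K}
    (hz : ∀ j ∈ s, z ≠ b j) :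
    ∑ j ∈ s, (z + b j) / (c * (z - b j)) = (2 * z * ∑ j ∈ s, 1 / (z - b j) - #s) / c := by
  rw [card_eq_sum_ones, Nat.cast_sum, Nat.cast_one, mul_sum, ← sum_sub_distrib, sum_div]
  refine sum_congr rfl fun j hj => ?_
  rw [div_mul_eq_div_div_swap]
  congr 1
  field_simp [sub_ne_zero.mpr (hz j hj)]
  ring

end Field

section CommRing

variable {R : Type*} [CommRing R]

theorem eval_derivative_X_sub_C_mul (z : R) (q : R[X]) :
    (derivative ((X - C z) * q)).eval z = q.eval z := by
  simp [derivative_mul]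

theorem eval_derivative_derivative_X_sub_C_mul (z : R) (q : R[X]) :
    (derivative (derivative ((X - C z) * q))).eval z = 2 * (derivative q).eval z := by
  simp only [derivative_mul, derivative_sub, derivative_X, derivative_C, sub_zero, one_mul,
    derivative_add, eval_add, eval_mul, eval_sub, eval_X, eval_C, sub_self, zero_mul, add_zero]
  ring

theorem coeff_X_mul_derivative (f : R[X]) (m : ℕ) :
    (X * derivative f).coeff m = m * f.coeff m := by
  cases m with
  | zero => simp
  | succ m => rw [coeff_X_mul, coeff_derivative]; push_cast; ring

theorem cast_succ_mul_choose_succ (n m : ℕ) :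
    ((m : R) + 1) * n.choose (m + 1) = ((n : R) - m) * n.choose m := by
  rcases le_or_gt m n with h | h
  · rw [← Nat.cast_sub h]
    norm_cast
    rw [mul_comm, Nat.choose_succ_right_eq, mul_comm]
  · simp [Nat.choose_eq_zero_of_lt h, Nat.choose_eq_zero_of_lt (h.trans (Nat.lt_succ_self m))]

variable (R)

noncomputable def chooseSqPoly (n : ℕ) : R[X] :=
  ∑ k ∈ range (n + 1), C ((n.choose k : R) ^ 2) * X ^ k

theorem coeff_chooseSqPoly (n m : ℕ) : (chooseSqPoly R n).coeff m = (n.choose m : R) ^ 2 := by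
  simp only [chooseSqPoly, finsetSum_coeff, coeff_C_mul, coeff_X_pow, mul_ite, mul_one, mul_zero,
    sum_ite_eq, mem_range]
  split_ifs with h
  · rfl
  · simp [Nat.choose_eq_zero_of_lt (not_lt.mp h)]

theorem natDegree_chooseSqPoly_le (n : ℕ) : (chooseSqPoly R n).natDegree ≤ n :=
  natDegree_le_iff_coeff_eq_zero.mpr fun m hm => by
    simp [coeff_chooseSqPoly, Nat.choose_eq_zero_of_lt (by exact_mod_cast hm : n < m)]

theorem monic_chooseSqPoly (n : ℕ) : (chooseSqPoly R n).Monic :=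
  monic_of_natDegree_le_of_coeff_eq_one n (natDegree_chooseSqPoly_le R n)
    (by simp [coeff_chooseSqPoly])

theorem chooseSqPoly_ode (n : ℕ) :
    X * (1 - X) * derivative (derivative (chooseSqPoly R n))
      + (1 + C (2 * (n : R) - 1) * X) * derivative (chooseSqPoly R n)
      = C ((n : R) ^ 2) * chooseSqPoly R n := by
  set P := chooseSqPoly R n
  -- rewrite through the Euler operator `X * derivative`, which scales the `m`-th coefficient by `m`
  have hEuler :
      X * (1 - X) * derivative (derivative P) + (1 + C (2 * (n : R) - 1) * X) * derivative P
        = X * derivative (derivative P) + derivative P - X * derivative (X * derivative P)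
          + X * derivative P + C (2 * (n : R) - 1) * (X * derivative P) := by
    simp only [derivative_mul, derivative_X]
    ring
  rw [hEuler]
  ext m
  simp only [coeff_add, coeff_sub, coeff_C_mul, coeff_X_mul_derivative, coeff_derivative,
    coeff_chooseSqPoly, P]
  linear_combination (((m : R) + 1) * n.choose (m + 1) + ((n : R) - m) * n.choose m)
    * cast_succ_mul_choose_succ (R := R) n m

end CommRing

theorem eval_chooseSqPoly (n : ℕ) (z : ℂ) : (chooseSqPoly ℂ n).eval z = pn n z := by
  simp [chooseSqPoly, pn, eval_finsetSum]

theorem pn_one_ne_zero (n : ℕ) : pn n 1 ≠ 0 := by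
  have h : pn n 1 = (2 * n).choose n := by simp [pn, ← Nat.sum_range_choose_sq]
  rw [h]
  exact_mod_cast (Nat.choose_pos (by omega : n ≤ 2 * n)).ne'

theorem pn_root_stieltjes_relation (n : ℕ) (a : Fin n → ℂ) (ha : Function.Injective a)
    (hroot : ∀ i, pn n (a i) = 0) (i : Fin n) :
    2 * a i * (1 - a i) * ∑ j ∈ univ.erase i, 1 / (a i - a j) + 1 + (2 * n - 1) * a i = 0 := by
  set q := ∏ j ∈ univ.erase i, (X - C (a j))
  have hfactor : chooseSqPoly ℂ n = (X - C (a i)) * q := by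
    rw [mul_prod_erase univ (fun j => X - C (a j)) (mem_univ i)]
    exact eq_prod_X_sub_C_of_injective (monic_chooseSqPoly ℂ n)
      (by simpa using natDegree_chooseSqPoly_le ℂ n) ha
      (fun j => by simp [IsRoot, eval_chooseSqPoly, hroot])
  have hne : ∀ j ∈ univ.erase i, a i ≠ a j := fun j hj => ha.ne (ne_of_mem_erase hj).symm
  have hq : q.eval (a i) ≠ 0 := by
    simpa [q, eval_prod, prod_ne_zero_iff, sub_ne_zero] using hne
  have hlog : (derivative q).eval (a i) = q.eval (a i) * ∑ j ∈ univ.erase i, 1 / (a i - a j) :=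
    eval_derivative_prod_X_sub_C _ _ hne
  have hode := congrArg (eval (a i)) (chooseSqPoly_ode ℂ n)
  simp only [eval_add, eval_mul, eval_sub, eval_one, eval_X, eval_C, hfactor,
    eval_derivative_X_sub_C_mul, eval_derivative_derivative_X_sub_C_mul, sub_self, zero_mul,
    mul_zero] at hode
  apply mul_left_cancel₀ hq
  linear_combination hode - 2 * a i * (1 - a i) * hlog

theorem pn_force_F2i_general (n : ℕ) (a : Fin n → ℂ)
    (ha : Function.Injective a) (hroot : ∀ i, pn n (a i) = 0) (i : Fin n) :
    ∑ j ∈ Finset.univ.erase i, (a i + a j) / ((n : ℂ) ^ 2 * (a i - a j))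
      + (1 + a i) / ((n : ℂ) * (1 - a i)) = 0 := by
  have hn : (n : ℂ) ≠ 0 := Nat.cast_ne_zero.mpr i.pos.ne'
  have h1 : 1 - a i ≠ 0 := sub_ne_zero.mpr fun h => pn_one_ne_zero n (h ▸ hroot i)
  have hcard : ((univ.erase i).card : ℂ) = n - 1 := by
    rw [card_erase_of_mem (mem_univ i), card_univ, Fintype.card_fin, Nat.cast_sub i.pos,
      Nat.cast_one]
  rw [sum_add_div_mul_sub _ _ _ fun j hj => ha.ne (ne_of_mem_erase hj).symm, hcard]
  field_simp
  linear_combination pn_root_stieltjes_relation n a ha hroot i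

theorem pn_force_F2i (n : ℕ) (hn : 1 ≤ n) (a : Fin n → ℂ)
    (ha : Function.Injective a) (hroot : ∀ i, pn n (a i) = 0) (i : Fin n) :
    ∑ j ∈ Finset.univ.erase i, (a i + a j) / ((n : ℂ) ^ 2 * (a i - a j))
      + (1 + a i) / ((n : ℂ) * (1 - a i)) = 0 :=
  pn_force_F2i_general n a ha hroot i
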